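/- arXiv:math/9501219 — 5 statements merged into one kernel-verified Lean document; each statement's English description precedes it below -/
import Mathlib

section
/- For indices i<j<k, the operators b_{ij}f = (s_{ij}f - f)/(x_i - x_j), where s_{ij} swaps variables x_i and x_j, satisfy the classical Yang-Baxter equation: [b_{12}, b_{13}] + [b_{12}, b_{23}] + [b_{13}, b_{23}] = 0 as operators on polynomials in x_1, x_2, x_3. -/
/-!
Multiplying by `(x_i - x_j)(x_i - x_k)(x_j - x_k)` clears every denominator: each composite
`b_{ab} b_{cd} f` becomes an explicit combination of `f`, its images under transpositions, and
its images under products of two transpositions. Those six products are just the two 3-cycles,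
and the linear coefficients in front of each permuted copy of `f` then cancel.
-/

open MvPolynomial Equiv

variable {σ R : Type*} [CommRing R] [DecidableEq σ]

/-- Division-free form of `d f = (s_{ij} f - f) / (X i - X j)`. -/
def IsDividedDifference (d : MvPolynomial σ R → MvPolynomial σ R) (i j : σ) : Prop :=
  ∀ f, (X i - X j) * d f = rename (swap i j) f - f

lemma rename_perm_rename_swap (τ : Perm σ) (a b : σ) (f : MvPolynomial σ R) :
    rename τ (rename (swap a b) f) = rename (swap (τ a) (τ b)) (rename τ f) := by
  simp only [rename_rename, ← Perm.coe_mul, mul_swap_eq_swap_mul]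

/-- The third factor is the denominator of `e` after conjugation by `swap i j`. -/
lemma IsDividedDifference.mul_apply_apply {d e : MvPolynomial σ R → MvPolynomial σ R}
    {i j k l : σ} (hd : IsDividedDifference d i j) (he : IsDividedDifference e k l)
    (f : MvPolynomial σ R) :
    (X i - X j) * (X k - X l) * (X (swap i j k) - X (swap i j l)) * d (e f) =
      (X k - X l) * (rename (swap i j) (rename (swap k l) f) - rename (swap i j) f)
        - (X (swap i j k) - X (swap i j l)) * (rename (swap k l) f - f) := by
  have he' := congrArg (rename (swap i j)) (he f)
  simp only [map_mul, map_sub, rename_X] at he'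
  linear_combination (X k - X l) * (X (swap i j k) - X (swap i j l)) * hd (e f)
    + (X k - X l) * he' - (X (swap i j k) - X (swap i j l)) * he f

theorem IsDividedDifference.yang_baxter [IsDomain R]
    {d₁₂ d₁₃ d₂₃ : MvPolynomial σ R → MvPolynomial σ R} {i j k : σ}
    (hij : i ≠ j) (hik : i ≠ k) (hjk : j ≠ k)
    (h₁₂ : IsDividedDifference d₁₂ i j) (h₁₃ : IsDividedDifference d₁₃ i k)
    (h₂₃ : IsDividedDifference d₂₃ j k) (f : MvPolynomial σ R) :
    (d₁₂ (d₁₃ f) - d₁₃ (d₁₂ f)) + (d₁₂ (d₂₃ f) - d₂₃ (d₁₂ f))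
      + (d₁₃ (d₂₃ f) - d₂₃ (d₁₃ f)) = 0 := by
  have hX : ∀ {a b : σ}, a ≠ b → (X a - X b : MvPolynomial σ R) ≠ 0 :=
    fun hab => sub_ne_zero.mpr (X_injective.ne hab)
  refine (mul_eq_zero.mp ?_).resolve_left
    (mul_ne_zero (mul_ne_zero (hX hij) (hX hik)) (hX hjk))
  have e₁ := h₁₂.mul_apply_apply h₁₃ f
  have e₂ := h₁₃.mul_apply_apply h₁₂ f
  have e₃ := h₁₂.mul_apply_apply h₂₃ f
  have e₄ := h₂₃.mul_apply_apply h₁₂ f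
  have e₅ := h₁₃.mul_apply_apply h₂₃ f
  have e₆ := h₂₃.mul_apply_apply h₁₃ f
  -- the six products of two transpositions are the two 3-cycles, each written in three ways
  have c₁ := rename_perm_rename_swap (swap i j) i k f
  have c₂ := rename_perm_rename_swap (swap j k) i j f
  have c₃ := rename_perm_rename_swap (swap i k) i j f
  have c₄ := rename_perm_rename_swap (swap j k) i k f
  simp only [swap_apply_left, swap_apply_right, swap_apply_of_ne_of_ne, hij, hik, hjk,
    hij.symm, hik.symm, hjk.symm, ne_eq, not_false_eq_true]
    at e₁ e₂ e₃ e₄ e₅ e₆ c₁ c₂ c₃ c₄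
  rw [swap_comm k j] at c₃
  linear_combination e₁ + e₂ + e₃ - e₄ - e₅ - e₆
    + (X i - X k) * c₁ + (X j - X k) * c₂ + (X i - X j) * c₃ - (X j - X k) * c₄

/-- The operators `b i j`, sending `f` to `(s_{ij} f - f)/(x_i - x_j)`
(characterized here by `(X i - X j) * b i j f = rename (swap i j) f - f`), satisfy the
classical Yang–Baxter equation `[b₁₂,b₁₃] + [b₁₂,b₂₃] + [b₁₃,b₂₃] = 0`. -/
theorem stmt0 (n : ℕ)
    (b : Fin n → Fin n → (MvPolynomial (Fin n) ℂ →ₗ[ℂ] MvPolynomial (Fin n) ℂ))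
    (hb : ∀ i j : Fin n, i ≠ j → ∀ f : MvPolynomial (Fin n) ℂ,
      (X i - X j) * b i j f = rename (Equiv.swap i j) f - f)
    (i j k : Fin n) (hij : i < j) (hjk : j < k) :
    (b i j ∘ₗ b i k - b i k ∘ₗ b i j)
      + (b i j ∘ₗ b j k - b j k ∘ₗ b i j)
      + (b i k ∘ₗ b j k - b j k ∘ₗ b i k) = 0 := by
  have hik := hij.trans hjk
  exact LinearMap.ext fun f => IsDividedDifference.yang_baxter hij.ne hik.ne hjk.ne
    (hb i j hij.ne) (hb i k hik.ne) (hb j k hjk.ne) f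
end

section
/- The rational Dunkl operators D_i = ∂_i - k·Σ_{j≠i} b_{ij} (where b_{ij}f = (s_{ij}f - f)/(x_i - x_j)) pairwise commute: [D_i, D_j] = 0 for all i, j. -/
open MvPolynomial


namespace Stmt2Aux
variable {n : ℕ}

abbrev R (n : ℕ) := MvPolynomial (Fin n) ℂ

lemma Xsub_ne {a c : Fin n} (h : a ≠ c) : (X a - X c : R n) ≠ 0 :=
  sub_ne_zero.mpr (fun e => h (X_injective e))

lemma pd_comm (i j : Fin n) (f : R n) :
    pderiv i (pderiv j f) = pderiv j (pderiv i f) := by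
  induction f using MvPolynomial.induction_on with
  | C a => simp
  | add p q hp hq => simp [hp, hq]
  | mul_X p s hp =>
      simp only [pderiv_mul, hp, pderiv_X, map_add, Pi.single_apply]
      split_ifs <;> simp <;> ring

lemma cancel {a c : Fin n} (h : a ≠ c) {u v : R n}
    (huv : (X a - X c) * u = (X a - X c) * v) : u = v :=
  mul_left_cancel₀ (Xsub_ne h) huv

variable (b : Fin n → Fin n → (R n →ₗ[ℂ] R n))
variable (hb : ∀ i j : Fin n, i ≠ j → ∀ f : R n,
      (X i - X j) * b i j f = rename (Equiv.swap i j) f - f)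

include hb

lemma bneg {i j : Fin n} (hij : i ≠ j) (f : R n) : b j i f = - b i j f := by
  have h1 := hb i j hij f
  have h2 := hb j i hij.symm f
  rw [Equiv.swap_comm] at h2
  exact cancel hij (by linear_combination h1 - h2)

lemma bbcomp {a c d e : Fin n} (hac : a ≠ c) (hde : d ≠ e) (w : R n)
    (hw : rename (Equiv.swap a c) (X d - X e) = w) (f : R n) :
    (X a - X c) * ((X d - X e) * (w * (b a c (b d e f)))) =
      (X d - X e) * (rename (Equiv.swap a c) (rename (Equiv.swap d e) f)
        - rename (Equiv.swap a c) f) - w * (rename (Equiv.swap d e) f - f) := by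
  have h1 := hb d e hde f
  have h2 := hb a c hac (b d e f)
  have h1' := congrArg (rename (Equiv.swap a c)) h1
  rw [map_mul, hw, map_sub] at h1'
  linear_combination ((X d - X e) * w) * h2 + (X d - X e) * h1' - w * h1

end Stmt2Aux

namespace Stmt2Aux
variable {n : ℕ}

lemma rename_congr {g1 g2 : Fin n → Fin n} (h : g1 = g2) (f : R n) :
    rename g1 f = rename g2 f := by rw [h]

variable {i j l : Fin n}

lemma rr_gamma₂ (hij : i ≠ j) (hjl : j ≠ l) (hil : i ≠ l) (f : R n) :
    rename (Equiv.swap j l) (rename (Equiv.swap i l) f)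
      = rename (Equiv.swap i j) (rename (Equiv.swap j l) f) := by
  rw [rename_rename, rename_rename]
  refine rename_congr ?_ f
  funext x
  simp only [Function.comp_apply, Equiv.swap_apply_def]
  split_ifs <;> simp_all

lemma rr_gamma₃ (hij : i ≠ j) (hjl : j ≠ l) (hil : i ≠ l) (f : R n) :
    rename (Equiv.swap i l) (rename (Equiv.swap i j) f)
      = rename (Equiv.swap i j) (rename (Equiv.swap j l) f) := by
  rw [rename_rename, rename_rename]
  refine rename_congr ?_ f
  funext x
  simp only [Function.comp_apply, Equiv.swap_apply_def]
  split_ifs <;> simp_all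

lemma rr_delta₂ (hij : i ≠ j) (hjl : j ≠ l) (hil : i ≠ l) (f : R n) :
    rename (Equiv.swap i l) (rename (Equiv.swap j l) f)
      = rename (Equiv.swap j l) (rename (Equiv.swap i j) f) := by
  rw [rename_rename, rename_rename]
  refine rename_congr ?_ f
  funext x
  simp only [Function.comp_apply, Equiv.swap_apply_def]
  split_ifs <;> simp_all

lemma rr_delta₃ (hij : i ≠ j) (hjl : j ≠ l) (hil : i ≠ l) (f : R n) :
    rename (Equiv.swap i j) (rename (Equiv.swap i l) f)
      = rename (Equiv.swap j l) (rename (Equiv.swap i j) f) := by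
  rw [rename_rename, rename_rename]
  refine rename_congr ?_ f
  funext x
  simp only [Function.comp_apply, Equiv.swap_apply_def]
  split_ifs <;> simp_all

end Stmt2Aux

namespace Stmt2Aux
variable {n : ℕ}
variable (b : Fin n → Fin n → (R n →ₗ[ℂ] R n))
variable (hb : ∀ i j : Fin n, i ≠ j → ∀ f : R n,
      (X i - X j) * b i j f = rename (Equiv.swap i j) f - f)
include hb

lemma triple {i j l : Fin n} (hij : i ≠ j) (hjl : j ≠ l) (hil : i ≠ l) (f : R n) :
    (b i j (b j l f) - b j l (b i j f)) + (b i l (b j l f) - b j l (b i l f))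
      + (b i j (b i l f) - b i l (b i j f)) = 0 := by
  have e1 : rename (Equiv.swap i j) ((X j - X l : R n)) = X i - X l := by
    rw [map_sub, rename_X, rename_X]
    simp [Equiv.swap_apply_def, hij, hjl, hil, hij.symm, hjl.symm, hil.symm]
  have e2 : rename (Equiv.swap j l) ((X i - X j : R n)) = X i - X l := by
    rw [map_sub, rename_X, rename_X]
    simp [Equiv.swap_apply_def, hij, hjl, hil, hij.symm, hjl.symm, hil.symm]
  have e3 : rename (Equiv.swap i l) ((X j - X l : R n)) = X j - X i := by
    rw [map_sub, rename_X, rename_X]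
    simp [Equiv.swap_apply_def, hij, hjl, hil, hij.symm, hjl.symm, hil.symm]
  have e4 : rename (Equiv.swap j l) ((X i - X l : R n)) = X i - X j := by
    rw [map_sub, rename_X, rename_X]
    simp [Equiv.swap_apply_def, hij, hjl, hil, hij.symm, hjl.symm, hil.symm]
  have e5 : rename (Equiv.swap i l) ((X i - X j : R n)) = X l - X j := by
    rw [map_sub, rename_X, rename_X]
    simp [Equiv.swap_apply_def, hij, hjl, hil, hij.symm, hjl.symm, hil.symm]
  have e6 : rename (Equiv.swap i j) ((X i - X l : R n)) = X j - X l := by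
    rw [map_sub, rename_X, rename_X]
    simp [Equiv.swap_apply_def, hij, hjl, hil, hij.symm, hjl.symm, hil.symm]
  have hT1 := bbcomp b hb hij hjl _ e1 f
  have hT2 := bbcomp b hb hjl hij _ e2 f
  have hT3 := bbcomp b hb hil hjl _ e3 f
  have hT4 := bbcomp b hb hjl hil _ e4 f
  have hT5 := bbcomp b hb hil hij _ e5 f
  have hT6 := bbcomp b hb hij hil _ e6 f
  rw [rr_delta₂ hij hjl hil] at hT3
  rw [rr_gamma₂ hij hjl hil] at hT4
  rw [rr_gamma₃ hij hjl hil] at hT5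
  rw [rr_delta₃ hij hjl hil] at hT6
  apply cancel hij
  apply cancel hjl
  apply cancel hil
  linear_combination hT1 - hT2 - hT3 - hT4 + hT5 + hT6

lemma bdisj {a c d e : Fin n} (hac : a ≠ c) (hde : d ≠ e)
    (had : a ≠ d) (hae : a ≠ e) (hcd : c ≠ d) (hce : c ≠ e) (f : R n) :
    b a c (b d e f) = b d e (b a c f) := by
  have e1 : rename (Equiv.swap a c) ((X d - X e : R n)) = X d - X e := by
    rw [map_sub, rename_X, rename_X]
    simp [Equiv.swap_apply_def, had, hae, hcd, hce, had.symm, hae.symm, hcd.symm, hce.symm]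
  have e2 : rename (Equiv.swap d e) ((X a - X c : R n)) = X a - X c := by
    rw [map_sub, rename_X, rename_X]
    simp [Equiv.swap_apply_def, had, hae, hcd, hce, had.symm, hae.symm, hcd.symm, hce.symm]
  have hT1 := bbcomp b hb hac hde _ e1 f
  have hT2 := bbcomp b hb hde hac _ e2 f
  have hcomm : rename (Equiv.swap d e) (rename (Equiv.swap a c) f)
      = rename (Equiv.swap a c) (rename (Equiv.swap d e) f) := by
    rw [rename_rename, rename_rename]
    refine rename_congr ?_ f
    funext x
    simp only [Function.comp_apply, Equiv.swap_apply_def]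
    split_ifs <;> simp_all
  rw [hcomm] at hT2
  have key1 : (X a - X c) * ((X d - X e) * (b a c (b d e f)))
      = rename (Equiv.swap a c) (rename (Equiv.swap d e) f)
        - rename (Equiv.swap a c) f - rename (Equiv.swap d e) f + f :=
    cancel hde (by linear_combination hT1)
  have key2 : (X d - X e) * ((X a - X c) * (b d e (b a c f)))
      = rename (Equiv.swap a c) (rename (Equiv.swap d e) f)
        - rename (Equiv.swap a c) f - rename (Equiv.swap d e) f + f :=
    cancel hac (by linear_combination hT2)
  exact cancel hac (cancel hde (by linear_combination key1 - key2))

end Stmt2Aux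

namespace Stmt2Aux
variable {n : ℕ}
variable (b : Fin n → Fin n → (R n →ₗ[ℂ] R n))
variable (hb : ∀ i j : Fin n, i ≠ j → ∀ f : R n,
      (X i - X j) * b i j f = rename (Equiv.swap i j) f - f)
include hb

/-- `∂_t` commutes with `b i j` when `t ∉ {i,j}`. -/
lemma dB {i j t : Fin n} (hij : i ≠ j) (hti : t ≠ i) (htj : t ≠ j) (f : R n) :
    pderiv t (b i j f) = b i j (pderiv t f) := by
  have h1 := hb i j hij f
  have h2 := hb i j hij (pderiv t f)
  have hd := congrArg (pderiv t) h1
  simp only [pderiv_mul, map_sub] at hd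
  have hzi : pderiv t ((X i : R n)) = 0 := pderiv_X_of_ne hti.symm
  have hzj : pderiv t ((X j : R n)) = 0 := pderiv_X_of_ne htj.symm
  have hr := pderiv_rename (f := ⇑(Equiv.swap i j)) (Equiv.injective _) t f
  rw [Equiv.swap_apply_of_ne_of_ne hti htj] at hr
  exact cancel hij (by
    linear_combination hd + hr - h2 - (b i j f) * hzi + (b i j f) * hzj)

/-- `∂_i + ∂_j` commutes with `b i j`. -/
lemma dC {i j : Fin n} (hij : i ≠ j) (f : R n) :
    pderiv i (b i j f) + pderiv j (b i j f)
      = b i j (pderiv i f) + b i j (pderiv j f) := by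
  have h1 := hb i j hij f
  have h2i := hb i j hij (pderiv i f)
  have h2j := hb i j hij (pderiv j f)
  have hdi := congrArg (pderiv i) h1
  simp only [pderiv_mul, map_sub] at hdi
  have hdj := congrArg (pderiv j) h1
  simp only [pderiv_mul, map_sub] at hdj
  have hzii : pderiv i ((X i : R n)) = 1 := pderiv_X_self i
  have hzij : pderiv i ((X j : R n)) = 0 := pderiv_X_of_ne hij.symm
  have hzji : pderiv j ((X i : R n)) = 0 := pderiv_X_of_ne hij
  have hzjj : pderiv j ((X j : R n)) = 1 := pderiv_X_self j
  have hri := pderiv_rename (f := ⇑(Equiv.swap i j)) (Equiv.injective _) j f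
  rw [Equiv.swap_apply_right] at hri
  have hrj := pderiv_rename (f := ⇑(Equiv.swap i j)) (Equiv.injective _) i f
  rw [Equiv.swap_apply_left] at hrj
  exact cancel hij (by
    linear_combination hdi + hdj + hri + hrj - h2i - h2j
      - (b i j f) * hzii + (b i j f) * hzij - (b i j f) * hzji + (b i j f) * hzjj)

end Stmt2Aux

namespace Stmt2Aux
variable {n : ℕ}
variable (b : Fin n → Fin n → (R n →ₗ[ℂ] R n))
variable (hb : ∀ i j : Fin n, i ≠ j → ∀ f : R n,
      (X i - X j) * b i j f = rename (Equiv.swap i j) f - f)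
include hb

lemma quad {i j : Fin n} (hij : i ≠ j) (f : R n) :
    ∑ l ∈ Finset.univ.erase i, ∑ m ∈ Finset.univ.erase j,
      (b i l (b j m f) - b j m (b i l f)) = 0 := by
  classical
  set c : Fin n → Fin n → R n := fun l m => b i l (b j m f) - b j m (b i l f) with hc
  have hjmem : j ∈ Finset.univ.erase i := Finset.mem_erase.mpr ⟨hij.symm, Finset.mem_univ j⟩
  have himem : i ∈ Finset.univ.erase j := Finset.mem_erase.mpr ⟨hij, Finset.mem_univ i⟩
  have h1 : ∑ l ∈ Finset.univ.erase i, ∑ m ∈ Finset.univ.erase j, c l m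
      = (∑ m ∈ Finset.univ.erase j, c j m)
        + ∑ l ∈ (Finset.univ.erase i).erase j, ∑ m ∈ Finset.univ.erase j, c l m :=
    (Finset.add_sum_erase _ _ hjmem).symm
  have h2 : ∑ m ∈ Finset.univ.erase j, c j m
      = c j i + ∑ m ∈ (Finset.univ.erase j).erase i, c j m :=
    (Finset.add_sum_erase _ _ himem).symm
  have hcji : c j i = 0 := by
    have hn1 : b j i f = - b i j f := bneg b hb hij f
    have hx1 : b i j (b j i f) = - b i j (b i j f) := by rw [hn1, map_neg]
    have hx2 : b j i (b i j f) = - b i j (b i j f) := bneg b hb hij _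
    rw [hc]; dsimp only; rw [hx1, hx2]; ring
  have hinner : ∀ l ∈ (Finset.univ.erase i).erase j,
      ∑ m ∈ Finset.univ.erase j, c l m = c l i + c l l := by
    intro l hl
    have hlj : l ≠ j := (Finset.mem_erase.mp hl).1
    have hli : l ≠ i := (Finset.mem_erase.mp (Finset.mem_erase.mp hl).2).1
    have hsub : ({i, l} : Finset (Fin n)) ⊆ Finset.univ.erase j := by
      intro x hx
      rcases Finset.mem_insert.mp hx with rfl | hx
      · exact himem
      · rw [Finset.mem_singleton] at hx
        subst hx
        exact Finset.mem_erase.mpr ⟨hlj, Finset.mem_univ _⟩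
    have hzero : ∀ m ∈ Finset.univ.erase j, m ∉ ({i, l} : Finset (Fin n)) → c l m = 0 := by
      intro m hm hnot
      have hmj : m ≠ j := (Finset.mem_erase.mp hm).1
      have hmi : m ≠ i := fun h => hnot (by simp [h])
      have hml : m ≠ l := fun h => hnot (by simp [h])
      exact sub_eq_zero_of_eq
        (bdisj b hb (Ne.symm hli) (Ne.symm hmj) hij (Ne.symm hmi) hlj (Ne.symm hml) f)
    rw [← Finset.sum_subset hsub hzero, Finset.sum_pair (Ne.symm hli)]
  have h3 : ∑ l ∈ (Finset.univ.erase i).erase j, ∑ m ∈ Finset.univ.erase j, c l m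
      = ∑ l ∈ (Finset.univ.erase i).erase j, (c l i + c l l) :=
    Finset.sum_congr rfl hinner
  have h4 : (Finset.univ.erase j).erase i = (Finset.univ.erase i).erase j :=
    Finset.erase_right_comm
  have h6 : ∑ t ∈ (Finset.univ.erase i).erase j, (c j t + (c t i + c t t)) = 0 := by
    apply Finset.sum_eq_zero
    intro t ht
    have htj : t ≠ j := (Finset.mem_erase.mp ht).1
    have hti : t ≠ i := (Finset.mem_erase.mp (Finset.mem_erase.mp ht).2).1
    have htr := triple b hb hij (Ne.symm htj) (Ne.symm hti) f
    have hn1 : b j i f = - b i j f := bneg b hb hij f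
    have hx1 : b i t (b j i f) = - b i t (b i j f) := by rw [hn1, map_neg]
    have hx2 : b j i (b i t f) = - b i j (b i t f) := bneg b hb hij _
    rw [hc]; dsimp only
    linear_combination htr + hx1 - hx2
  rw [h1, h2, h3, h4, hcji, zero_add]
  rw [Finset.sum_add_distrib] at h6
  linear_combination h6

end Stmt2Aux

namespace Stmt2Aux
variable {n : ℕ}
variable (b : Fin n → Fin n → (R n →ₗ[ℂ] R n))
variable (hb : ∀ i j : Fin n, i ≠ j → ∀ f : R n,
      (X i - X j) * b i j f = rename (Equiv.swap i j) f - f)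
include hb

lemma lin {i j : Fin n} (hij : i ≠ j) (f : R n) :
    ∑ m ∈ Finset.univ.erase j, (pderiv i (b j m f) - b j m (pderiv i f))
      = ∑ m ∈ Finset.univ.erase i, (pderiv j (b i m f) - b i m (pderiv j f)) := by
  have himem : i ∈ Finset.univ.erase j := Finset.mem_erase.mpr ⟨hij, Finset.mem_univ i⟩
  have hjmem : j ∈ Finset.univ.erase i := Finset.mem_erase.mpr ⟨hij.symm, Finset.mem_univ j⟩
  have hl2 : ∑ m ∈ Finset.univ.erase j, (pderiv i (b j m f) - b j m (pderiv i f))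
      = pderiv i (b j i f) - b j i (pderiv i f) := by
    refine Finset.sum_eq_single_of_mem i himem ?_
    intro m hm hmi
    have hmj : m ≠ j := (Finset.mem_erase.mp hm).1
    exact sub_eq_zero_of_eq (dB b hb (Ne.symm hmj) hij (Ne.symm hmi) f)
  have hl3 : ∑ m ∈ Finset.univ.erase i, (pderiv j (b i m f) - b i m (pderiv j f))
      = pderiv j (b i j f) - b i j (pderiv j f) := by
    refine Finset.sum_eq_single_of_mem j hjmem ?_
    intro m hm hmj
    have hmi : m ≠ i := (Finset.mem_erase.mp hm).1
    exact sub_eq_zero_of_eq (dB b hb (Ne.symm hmi) hij.symm (Ne.symm hmj) f)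
  rw [hl2, hl3]
  have hn1 : b j i f = - b i j f := bneg b hb hij f
  have hd1 : pderiv i (b j i f) = - pderiv i (b i j f) := by rw [hn1, map_neg]
  have hn2 : b j i (pderiv i f) = - b i j (pderiv i f) := bneg b hb hij _
  have hC := dC b hb hij f
  linear_combination hd1 - hn2 - hC

end Stmt2Aux


open Stmt2Aux in
/-- The rational Dunkl operators `D_i = ∂_i - k·Σ_{j≠i} b_{ij}` pairwise
commute, where `b_{ij} f = (s_{ij}f - f)/(x_i - x_j)`. -/
theorem stmt2 (n : ℕ) (k : ℂ)
    (b : Fin n → Fin n → (MvPolynomial (Fin n) ℂ →ₗ[ℂ] MvPolynomial (Fin n) ℂ))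
    (hb : ∀ i j : Fin n, i ≠ j → ∀ f : MvPolynomial (Fin n) ℂ,
      (X i - X j) * b i j f = rename (Equiv.swap i j) f - f)
    (D : Fin n → (MvPolynomial (Fin n) ℂ →ₗ[ℂ] MvPolynomial (Fin n) ℂ))
    (hD : ∀ i, D i = (pderiv (R := ℂ) i).toLinearMap
        - k • ∑ j ∈ Finset.univ.erase i, b i j)
    (i j : Fin n) :
    D i ∘ₗ D j = D j ∘ₗ D i := by
  rcases eq_or_ne i j with rfl | hij
  · rfl
  apply LinearMap.ext; intro f
  rw [LinearMap.comp_apply, LinearMap.comp_apply, hD i, hD j]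
  simp only [LinearMap.sub_apply, LinearMap.smul_apply, LinearMap.coe_sum,
    Finset.sum_apply, Derivation.coeFn_coe, map_sub, map_smul, Derivation.map_smul, map_sum,
    Finset.sum_sub_distrib]
  simp only [smul_eq_C_mul, ← Finset.mul_sum]
  have hpd := pd_comm i j f
  have hlin := lin b hb hij f
  simp only [Finset.sum_sub_distrib] at hlin
  have hq := quad b hb hij f
  simp only [Finset.sum_sub_distrib] at hq
  have hcomm1 : ∑ x ∈ Finset.univ.erase j, ∑ c ∈ Finset.univ.erase i, b i c (b j x f)
      = ∑ c ∈ Finset.univ.erase i, ∑ x ∈ Finset.univ.erase j, b i c (b j x f) :=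
    Finset.sum_comm
  linear_combination hpd - C k * hlin + C k * C k * hq + C k * C k * hcomm1
end

section
/- The set of minuscule weights (including 0) forms a complete system of coset representatives for P/Q: every λ ∈ P can be written uniquely as λ = b + α with b minuscule and α ∈ Q. -/
/-!
Existence: if a weight `b` is not minuscule, some positive root `α` has `k = ⟨b, α^∨⟩ ≥ 2` or
`k ≤ -1`, and `b - α`, resp. `b + α`, lies in `b + Q` with potential `‖·‖² - f` smaller by at
least `f α`, where `f` is a linear form defining the positive system, scaled so that
`2 f α ≤ ‖α‖²`. The potential is bounded below, so this descent ends at a minuscule weight.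

Uniqueness: if `v ≠ 0` is a sum of roots with `|⟨v, γ^∨⟩| ≤ 1` for all roots `γ`, one of the
summands `α` has `(α, v) > 0`, which forces `⟨v, α^∨⟩ = 1`. Then `v - α = s_α v` is a shorter sum
with the same bound, so by induction `v = α`, contradicting `⟨α, α^∨⟩ = 2`. The difference of two
minuscule weights that are congruent modulo `Q` is such a `v`.
-/

open scoped RealInnerProductSpace

theorem Finset.exists_pos_forall_le {ι α : Type*} [LinearOrder α] [Zero α] [NoMaxOrder α]
    (s : Finset ι) (g : ι → α) (hg : ∀ i ∈ s, 0 < g i) : ∃ ε > 0, ∀ i ∈ s, ε ≤ g i := by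
  rcases s.eq_empty_or_nonempty with rfl | hs
  · obtain ⟨ε, hε⟩ := exists_gt (0 : α)
    exact ⟨ε, hε, by simp⟩
  · obtain ⟨j, hj, hmin⟩ := s.exists_min_image g hs
    exact ⟨g j, hg j hj, hmin⟩

theorem exists_of_uniform_descent {α : Type*} {P Q : α → Prop} (Φ : α → ℝ) {δ m : ℝ}
    (hδ : 0 < δ) (hm : ∀ a, P a → m ≤ Φ a)
    (hstep : ∀ a, P a → ¬Q a → ∃ a', P a' ∧ Φ a' + δ ≤ Φ a) {a : α} (ha : P a) :
    ∃ a', P a' ∧ Q a' := by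
  suffices h : ∀ n : ℕ, ∀ a, P a → Φ a ≤ m + n * δ → ∃ a', P a' ∧ Q a' by
    obtain ⟨n, hn⟩ := exists_nat_ge ((Φ a - m) / δ)
    exact h n a ha (by linarith [(div_le_iff₀ hδ).mp hn])
  intro n
  induction n with
  | zero =>
    intro a ha hΦ
    rw [Nat.cast_zero, zero_mul, add_zero] at hΦ
    by_contra hQ
    obtain ⟨a', ha', hlt⟩ := hstep a ha fun hq => hQ ⟨a, ha, hq⟩
    linarith [hm a' ha']
  | succ n ih =>
    intro a ha hΦ
    by_cases hq : Q a
    · exact ⟨a, ha, hq⟩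
    obtain ⟨a', ha', hlt⟩ := hstep a ha hq
    exact ih a' ha' (by push_cast at hΦ; linarith)

theorem List.exists_mem_inner_sum_pos {V : Type*} [NormedAddCommGroup V] [InnerProductSpace ℝ V]
    {l : List V} (h : l.sum ≠ 0) : ∃ x ∈ l, 0 < ⟪x, l.sum⟫ := by
  have hsum : ⟪l.sum, l.sum⟫ = (l.map fun x => ⟪x, l.sum⟫).sum := by
    rw [real_inner_comm, ← innerSL_apply_apply (𝕜 := ℝ), map_list_sum]
    simp [real_inner_comm]
  have hpos : (l.map fun _ => (0 : ℝ)).sum < (l.map fun x => ⟪x, l.sum⟫).sum := by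
    rw [← hsum]
    simpa using real_inner_self_pos.mpr h
  simpa using List.exists_lt_of_sum_lt _ _ hpos

namespace EuclideanRootSystem

variable {V : Type*} [NormedAddCommGroup V] [InnerProductSpace ℝ V]

noncomputable def coroot (α : V) : V := (2 / ⟪α, α⟫) • α

noncomputable def reflect (α v : V) : V := v - ⟪v, coroot α⟫ • α

def weightLattice (R : Set V) : AddSubgroup V where
  carrier := {v | ∀ α ∈ R, ∃ z : ℤ, (z : ℝ) = ⟪v, coroot α⟫}
  zero_mem' _ _ := ⟨0, by simp⟩
  add_mem' hv hw α hα := by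
    obtain ⟨m, hm⟩ := hv α hα
    obtain ⟨n, hn⟩ := hw α hα
    exact ⟨m + n, by push_cast; rw [hm, hn, inner_add_left]⟩
  neg_mem' hv α hα := by
    obtain ⟨m, hm⟩ := hv α hα
    exact ⟨-m, by push_cast; rw [hm, inner_neg_left]⟩

def IsMinuscule (R posR : Set V) (b : V) : Prop :=
  b ∈ weightLattice R ∧ ∀ α ∈ posR, 0 ≤ ⟪b, coroot α⟫ ∧ ⟪b, coroot α⟫ ≤ 1

theorem inner_coroot (v α : V) : ⟪v, coroot α⟫ = 2 * ⟪v, α⟫ / ‖α‖ ^ 2 := by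
  rw [coroot, real_inner_smul_right, real_inner_self_eq_norm_sq]
  ring

theorem inner_coroot_mul_norm_sq {α : V} (hα : α ≠ 0) (v : V) :
    ⟪v, coroot α⟫ * ‖α‖ ^ 2 = 2 * ⟪v, α⟫ := by
  rw [inner_coroot]
  field_simp [norm_ne_zero_iff.mpr hα]

theorem inner_self_coroot {α : V} (hα : α ≠ 0) : ⟪α, coroot α⟫ = 2 := by
  rw [inner_coroot, real_inner_self_eq_norm_sq]
  field_simp [norm_ne_zero_iff.mpr hα]

theorem inner_neg_coroot (v α : V) : ⟪v, coroot (-α)⟫ = -⟪v, coroot α⟫ := by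
  simp only [inner_coroot, inner_neg_right, norm_neg]
  ring

theorem norm_sub_sq_eq {α : V} (hα : α ≠ 0) (b : V) :
    ‖b - α‖ ^ 2 = ‖b‖ ^ 2 - (⟪b, coroot α⟫ - 1) * ‖α‖ ^ 2 := by
  rw [norm_sub_sq_real, sub_mul, inner_coroot_mul_norm_sq hα]
  ring

theorem norm_add_sq_eq {α : V} (hα : α ≠ 0) (b : V) :
    ‖b + α‖ ^ 2 = ‖b‖ ^ 2 + (⟪b, coroot α⟫ + 1) * ‖α‖ ^ 2 := by
  rw [norm_add_sq_real, add_mul, inner_coroot_mul_norm_sq hα]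
  ring

theorem inner_reflect_left (α v w : V) : ⟪reflect α v, w⟫ = ⟪v, reflect α w⟫ := by
  simp only [reflect, inner_coroot, inner_sub_left, inner_sub_right, real_inner_smul_left,
    real_inner_smul_right, real_inner_comm α]
  ring

theorem reflect_reflect {α : V} (hα : α ≠ 0) (v : V) : reflect α (reflect α v) = v := by
  rw [reflect, reflect, inner_sub_left, real_inner_smul_left, inner_self_coroot hα]
  module

theorem inner_self_reflect (α v : V) : ⟪reflect α v, reflect α v⟫ = ⟪v, v⟫ := by
  rcases eq_or_ne α 0 with rfl | hα
  · simp [reflect]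
  rw [inner_reflect_left, reflect_reflect hα]

theorem inner_reflect_coroot (α v γ : V) :
    ⟪reflect α v, coroot γ⟫ = ⟪v, coroot (reflect α γ)⟫ := by
  rw [coroot, coroot, inner_self_reflect, real_inner_smul_right, real_inner_smul_right,
    inner_reflect_left]

section Existence

variable {R : Set V}

theorem exists_sub_mem_closure_of_inner_coroot_notMem_Icc (hRP : R ⊆ weightLattice R)
    (f : V →ₗ[ℝ] ℝ) {b α : V} (hb : b ∈ weightLattice R) (hαR : α ∈ R) (hα0 : α ≠ 0)
    (hfα : 2 * f α ≤ ‖α‖ ^ 2) (hk : ¬(0 ≤ ⟪b, coroot α⟫ ∧ ⟪b, coroot α⟫ ≤ 1)) :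
    ∃ b' ∈ weightLattice R, b - b' ∈ AddSubgroup.closure R ∧
      ‖b'‖ ^ 2 - f b' + f α ≤ ‖b‖ ^ 2 - f b := by
  have hαQ : α ∈ AddSubgroup.closure R := AddSubgroup.subset_closure hαR
  have hαα : 0 ≤ ‖α‖ ^ 2 := by positivity
  obtain ⟨k, hkb⟩ := hb α hαR
  rw [← hkb] at hk
  have hk2 : 2 ≤ k ∨ k ≤ -1 := by
    by_contra! h
    exact hk ⟨by exact_mod_cast (show 0 ≤ k by omega), by exact_mod_cast (show k ≤ 1 by omega)⟩
  rcases hk2 with hk2 | hk2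
  · have : (2 : ℝ) ≤ k := by exact_mod_cast hk2
    refine ⟨b - α, sub_mem hb (hRP hαR), by simpa using hαQ, ?_⟩
    rw [norm_sub_sq_eq hα0, ← hkb, map_sub]
    nlinarith
  · have : (k : ℝ) ≤ -1 := by exact_mod_cast hk2
    refine ⟨b + α, add_mem hb (hRP hαR), by simpa using neg_mem hαQ, ?_⟩
    rw [norm_add_sq_eq hα0, ← hkb, map_add]
    nlinarith

theorem neg_sq_opNorm_div_four_le (g : V →L[ℝ] ℝ) (b : V) :
    -(‖g‖ ^ 2 / 4) ≤ ‖b‖ ^ 2 - g b := by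
  have : g b ≤ ‖g‖ * ‖b‖ := (le_abs_self _).trans (g.le_opNorm b)
  nlinarith [sq_nonneg (2 * ‖b‖ - ‖g‖)]

theorem exists_isMinuscule_sub_mem_closure {posR : Finset V} (hsub : (posR : Set V) ⊆ R)
    (hRP : R ⊆ weightLattice R) (f : V →L[ℝ] ℝ) (hf : ∀ α ∈ posR, 0 < f α)
    {lam : V} (hlam : lam ∈ weightLattice R) :
    ∃ b, IsMinuscule R posR b ∧ lam - b ∈ AddSubgroup.closure R := by
  have hne : ∀ α ∈ posR, α ≠ 0 := fun α hα h => by simpa [h] using hf α hα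
  obtain ⟨ε, hε, hεf⟩ := posR.exists_pos_forall_le (fun α => ‖α‖ ^ 2 / (2 * f α))
    fun α hα => by have := hf α hα; have := hne α hα; positivity
  obtain ⟨δ, hδ, hδf⟩ := posR.exists_pos_forall_le f hf
  set g := ε • f
  have hg : ∀ α ∈ posR, 2 * g α ≤ ‖α‖ ^ 2 := fun α hα => by
    have := (le_div_iff₀ (by linarith [hf α hα])).mp (hεf α hα)
    simp only [g, smul_apply, smul_eq_mul]
    linarith
  have hstep : ∀ b, b ∈ weightLattice R ∧ lam - b ∈ AddSubgroup.closure R →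
      ¬(∀ α ∈ posR, 0 ≤ ⟪b, coroot α⟫ ∧ ⟪b, coroot α⟫ ≤ 1) →
      ∃ b', (b' ∈ weightLattice R ∧ lam - b' ∈ AddSubgroup.closure R) ∧
        ‖b'‖ ^ 2 - g b' + ε * δ ≤ ‖b‖ ^ 2 - g b := by
    rintro b ⟨hb, hlamb⟩ hnot
    obtain ⟨α, hα, hk⟩ := not_forall₂.mp hnot
    obtain ⟨b', hb', hbb', hdec⟩ := exists_sub_mem_closure_of_inner_coroot_notMem_Icc hRP
      g.toLinearMap hb (hsub hα) (hne α hα) (hg α hα) hk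
    refine ⟨b', ⟨hb', by simpa using add_mem hlamb hbb'⟩, ?_⟩
    have : ε * δ ≤ g α := by
      simpa [g] using mul_le_mul_of_nonneg_left (hδf α hα) hε.le
    simp only [ContinuousLinearMap.coe_coe] at hdec
    linarith
  obtain ⟨b, ⟨hb, hlamb⟩, hmin⟩ := exists_of_uniform_descent (fun b => ‖b‖ ^ 2 - g b)
    (mul_pos hε hδ) (fun b _ => neg_sq_opNorm_div_four_le g b) hstep ⟨hlam, by simp⟩
  exact ⟨b, ⟨hb, hmin⟩, hlamb⟩

end Existence

section Uniqueness

variable {R : Set V}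

theorem list_sum_eq_zero_of_abs_inner_coroot_le_one (h0 : (0 : V) ∉ R)
    (hRP : R ⊆ weightLattice R) (hreflect : ∀ α ∈ R, ∀ β ∈ R, reflect α β ∈ R)
    {l : List V} (hl : ∀ x ∈ l, x ∈ R) (hbound : ∀ γ ∈ R, |⟪l.sum, coroot γ⟫| ≤ 1) :
    l.sum = 0 := by
  classical
  induction hn : l.length generalizing l with
  | zero => simp [List.length_eq_zero_iff.mp hn]
  | succ n ih =>
    by_contra hv
    obtain ⟨x, hxl, hxv⟩ := List.exists_mem_inner_sum_pos hv
    have hxR : x ∈ R := hl x hxl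
    have hx0 : x ≠ 0 := ne_of_mem_of_not_mem hxR h0
    have hpair : ⟪l.sum, coroot x⟫ = 1 := by
      obtain ⟨z, hz⟩ := (weightLattice R).list_sum_mem (fun y hy => hRP (hl y hy)) x hxR
      have hpos : 0 < ⟪l.sum, coroot x⟫ := by
        rw [inner_coroot, real_inner_comm]
        have := norm_pos_iff.mpr hx0
        positivity
      have hle := (abs_le.mp (hbound x hxR)).2
      rw [← hz] at hpos hle ⊢
      have : z = 1 := by
        have : 0 < z := by exact_mod_cast hpos
        have : z ≤ 1 := by exact_mod_cast hle
        omega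
      simp [this]
    have herase : (l.erase x).sum = reflect x l.sum := by
      rw [reflect, hpair, one_smul, (List.perm_cons_erase hxl).sum_eq, List.sum_cons]
      abel
    have hrest : reflect x l.sum = 0 := by
      rw [← herase]
      refine ih (fun y hy => hl y (List.mem_of_mem_erase hy)) (fun γ hγ => ?_)
        (by rw [List.length_erase_of_mem hxl, hn]; rfl)
      rw [herase, inner_reflect_coroot]
      exact hbound _ (hreflect x hxR γ hγ)
    have hvx : l.sum = x := by
      rwa [reflect, hpair, one_smul, sub_eq_zero] at hrest
    have := (abs_le.mp (hbound x hxR)).2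
    rw [hvx, inner_self_coroot hx0] at this
    norm_num at this

theorem IsMinuscule.eq_of_sub_mem_closure {posR : Set V} (h0 : (0 : V) ∉ R)
    (hneg : ∀ α ∈ R, -α ∈ R) (hpos : ∀ α ∈ R, α ∈ posR ∨ -α ∈ posR)
    (hRP : R ⊆ weightLattice R) (hreflect : ∀ α ∈ R, ∀ β ∈ R, reflect α β ∈ R) {b c : V}
    (hb : IsMinuscule R posR b) (hc : IsMinuscule R posR c)
    (hbc : b - c ∈ AddSubgroup.closure R) : b = c := by
  have hR : R ∪ -R = R := Set.union_eq_left.mpr fun α hα => by simpa using hneg _ hα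
  have hmon : b - c ∈ AddSubmonoid.closure R := by
    rwa [← hR, ← AddSubgroup.closure_toAddSubmonoid]
  obtain ⟨l, hl, hsum⟩ := AddSubmonoid.exists_list_of_mem_closure hmon
  have hposbound : ∀ α ∈ posR, |⟪b - c, coroot α⟫| ≤ 1 := fun α hα => by
    rw [inner_sub_left, abs_le]
    constructor <;> linarith [hb.2 α hα, hc.2 α hα]
  refine sub_eq_zero.mp (hsum ▸ list_sum_eq_zero_of_abs_inner_coroot_le_one h0 hRP hreflect hl
    fun γ hγ => hsum ▸ ?_)
  rcases hpos γ hγ with h | h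
  · exact hposbound γ h
  · simpa [inner_neg_coroot] using hposbound _ h

end Uniqueness

end EuclideanRootSystem

open EuclideanRootSystem

theorem stmt7_general {V : Type*} [NormedAddCommGroup V] [InnerProductSpace ℝ V]
    (R posR : Finset V) (hsub : posR ⊆ R) (h0 : (0 : V) ∉ R)
    (hneg : ∀ α ∈ R, -α ∈ R)
    (hRdecomp : ∀ α ∈ R, (α ∈ posR ∧ -α ∉ posR) ∨ (α ∉ posR ∧ -α ∈ posR))
    (hpossys : ∃ f : V →ₗ[ℝ] ℝ, ∀ α ∈ R, (0 < f α ↔ α ∈ posR) ∧ f α ≠ 0)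
    (hspanR : Submodule.span ℝ (R : Set V) = ⊤)
    (coroot : V → V) (hcoroot : ∀ α : V, coroot α = (2 / ⟪α, α⟫) • α)
    (hcrystal : ∀ α ∈ R, ∀ β ∈ R, ∃ z : ℤ, (z : ℝ) = ⟪β, coroot α⟫)
    (hreflect : ∀ α ∈ R, ∀ β ∈ R, β - ⟪β, coroot α⟫ • α ∈ R)
    (lam : V) (hlam : ∀ α ∈ R, ∃ z : ℤ, (z : ℝ) = ⟪lam, coroot α⟫) :
    ∃! bq : V × V,
      ((∀ α ∈ R, ∃ z : ℤ, (z : ℝ) = ⟪bq.1, coroot α⟫) ∧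
        (∀ α ∈ posR, 0 ≤ ⟪bq.1, coroot α⟫ ∧ ⟪bq.1, coroot α⟫ ≤ 1)) ∧
      bq.2 ∈ AddSubgroup.closure (R : Set V) ∧
      lam = bq.1 + bq.2 := by
  obtain rfl : coroot = EuclideanRootSystem.coroot := funext hcoroot
  have hRP : (R : Set V) ⊆ weightLattice (R : Set V) := fun β hβ α hα => hcrystal α hα β hβ
  have : Module.Finite ℝ V := ⟨⟨R, hspanR⟩⟩
  obtain ⟨f, hf⟩ := hpossys
  obtain ⟨b, hb, hlamb⟩ := exists_isMinuscule_sub_mem_closure (by exact_mod_cast hsub) hRP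
    (LinearMap.toContinuousLinearMap f) (fun α hα => (hf α (hsub hα)).1.2 hα) hlam
  refine ⟨(b, lam - b), ⟨hb, hlamb, (add_sub_cancel b lam).symm⟩, ?_⟩
  rintro ⟨c, q⟩ ⟨hc, hq, rfl⟩
  obtain rfl : c = b := IsMinuscule.eq_of_sub_mem_closure h0 hneg
    (fun α hα => (hRdecomp α hα).imp And.left And.right) hRP hreflect hc hb
    (by convert sub_mem hlamb hq using 1; abel)
  simp

/-- For a reduced irreducible (crystallographic) root system `R` with
positive system `posR`, weight lattice `P = {v : (v, α^∨) ∈ ℤ for all α ∈ R}` and root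
lattice `Q` (the subgroup generated by `R`), the minuscule weights (those dominant
weights `b` with `0 ≤ (b, α^∨) ≤ 1` for all positive `α`, including `0`) form a complete
system of coset representatives of `P/Q`: every weight `lam` can be written uniquely as
`lam = b + α` with `b` minuscule and `α ∈ Q`. -/
theorem stmt7 {V : Type*} [NormedAddCommGroup V] [InnerProductSpace ℝ V]
    (R posR : Finset V) (hsub : posR ⊆ R) (h0 : (0 : V) ∉ R)
    (hneg : ∀ α ∈ R, -α ∈ R)
    (hRdecomp : ∀ α ∈ R, (α ∈ posR ∧ -α ∉ posR) ∨ (α ∉ posR ∧ -α ∈ posR))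
    (hpossys : ∃ f : V →ₗ[ℝ] ℝ, ∀ α ∈ R, (0 < f α ↔ α ∈ posR) ∧ f α ≠ 0)
    (hspanR : Submodule.span ℝ (R : Set V) = ⊤)
    (coroot : V → V) (hcoroot : ∀ α : V, coroot α = (2 / ⟪α, α⟫) • α)
    (hreduced : ∀ α ∈ R, ∀ c : ℝ, c • α ∈ R → c = 1 ∨ c = -1)
    (hcrystal : ∀ α ∈ R, ∀ β ∈ R, ∃ z : ℤ, (z : ℝ) = ⟪β, coroot α⟫)
    (hreflect : ∀ α ∈ R, ∀ β ∈ R, β - ⟪β, coroot α⟫ • α ∈ R)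
    (hirred : ∀ R1 R2 : Set V, R1 ∪ R2 = (R : Set V) →
      (∀ x ∈ R1, ∀ y ∈ R2, ⟪x, y⟫ = (0 : ℝ)) → R1 = ∅ ∨ R2 = ∅)
    (lam : V) (hlam : ∀ α ∈ R, ∃ z : ℤ, (z : ℝ) = ⟪lam, coroot α⟫) :
    ∃! bq : V × V,
      ((∀ α ∈ R, ∃ z : ℤ, (z : ℝ) = ⟪bq.1, coroot α⟫) ∧
        (∀ α ∈ posR, 0 ≤ ⟪bq.1, coroot α⟫ ∧ ⟪bq.1, coroot α⟫ ≤ 1)) ∧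
      bq.2 ∈ AddSubgroup.closure (R : Set V) ∧
      lam = bq.1 + bq.2 :=
  stmt7_general R posR hsub h0 hneg hRdecomp hpossys hspanR coroot hcoroot hcrystal hreflect lam
    hlam
end

section
/- For w ∈ W and a coweight λ ∈ P^∨, the length of the element w·τ(λ) in the extended affine Weyl group equals Σ_{α ∈ R^+} |(λ, α) + χ(wα)|, where χ(α) = 0 if α ∈ R^+ and χ(α) = 1 if α ∈ R^-. -/
open scoped RealInnerProductSpace Classical

lemma count_Icc_card (M a b : ℤ) (p : ℤ → Prop) [DecidablePred p]
    (ha : 0 ≤ a) (hbM : b ≤ M + 1)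
    (hp : ∀ k, 0 ≤ k → k ≤ M → (p k ↔ a ≤ k ∧ k < b)) :
    ((Finset.Icc (0:ℤ) M).filter p).card = (b - a).toNat := by
  have h : (Finset.Icc (0:ℤ) M).filter p = Finset.Ico a b := by
    ext k
    simp only [Finset.mem_filter, Finset.mem_Icc, Finset.mem_Ico]
    constructor
    · rintro ⟨⟨h0, hM'⟩, hk⟩
      exact (hp k h0 hM').1 hk
    · intro hk
      have h0 : 0 ≤ k := le_trans ha hk.1
      have hM' : k ≤ M := by omega
      exact ⟨⟨h0, hM'⟩, (hp k h0 hM').2 hk⟩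
  rw [h, Int.card_Ico]

/-- For `w ∈ W` and a coweight `lam ∈ P^∨`, the length of `w·τ(lam)` in the
extended affine Weyl group, i.e. the number of positive affine roots `α + kδ`
(`k > 0`, or `k = 0` and `α ∈ R⁺`) sent by `w·τ(lam)` to negative affine roots, equals
`Σ_{α ∈ R⁺} |(lam, α) + χ(wα)|` where `χ(α) = 0` for `α ∈ R⁺` and `χ(α) = 1` for
`α ∈ R⁻`.  Here `w·τ(lam)` sends the affine root `α + kδ` to `wα + (k - (lam,α))δ`, and
the Weyl-group element `w` is an isometry of `V` preserving `R`; the coweight `lam`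
pairs integrally with all roots, `(lam, α) = c α ∈ ℤ`. -/
theorem stmt8 {V : Type*} [NormedAddCommGroup V] [InnerProductSpace ℝ V]
    (R posR : Finset V) (hsub : posR ⊆ R)
    (hneg : ∀ α ∈ R, -α ∈ R)
    (hRdecomp : ∀ α ∈ R, (α ∈ posR ∧ -α ∉ posR) ∨ (α ∉ posR ∧ -α ∈ posR))
    (w : V ≃ₗᵢ[ℝ] V) (hw : ∀ α ∈ R, w α ∈ R)
    (lam : V) (c : V → ℤ) (hc : ∀ α ∈ R, (c α : ℝ) = ⟪lam, α⟫)
    (chi : V → ℤ) (hchi : ∀ α, chi α = if α ∈ posR then 0 else 1) :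
    Set.ncard {p : V × ℤ |
        ((p.1 ∈ R ∧ 0 < p.2) ∨ (p.1 ∈ posR ∧ p.2 = 0)) ∧
        (p.2 - c p.1 < 0 ∨ (p.2 - c p.1 = 0 ∧ w p.1 ∉ posR))}
      = ∑ α ∈ posR, (c α + chi (w α)).natAbs := by
  classical
  set M : ℤ := ((R.sup fun α => (c α).natAbs : ℕ) : ℤ) + 1 with hM
  have hMb : ∀ α ∈ R, ((c α).natAbs : ℤ) ≤ M - 1 := by
    intro α hα
    have h := Finset.le_sup (f := fun α => (c α).natAbs) hα
    have h2 : ((c α).natAbs : ℤ) ≤ ((R.sup fun α => (c α).natAbs : ℕ) : ℤ) := by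
      exact_mod_cast h
    omega
  have hcneg : ∀ α ∈ R, c (-α) = -c α := by
    intro α hα
    have h1 := hc α hα
    have h2 := hc (-α) (hneg α hα)
    rw [inner_neg_right, ← h1] at h2
    exact_mod_cast h2
  set F : Finset (V × ℤ) := (R ×ˢ Finset.Icc (0 : ℤ) M).filter (fun p =>
      ((p.1 ∈ R ∧ 0 < p.2) ∨ (p.1 ∈ posR ∧ p.2 = 0)) ∧
      (p.2 - c p.1 < 0 ∨ (p.2 - c p.1 = 0 ∧ w p.1 ∉ posR))) with hF
  have hSF : {p : V × ℤ |
        ((p.1 ∈ R ∧ 0 < p.2) ∨ (p.1 ∈ posR ∧ p.2 = 0)) ∧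
        (p.2 - c p.1 < 0 ∨ (p.2 - c p.1 = 0 ∧ w p.1 ∉ posR))} = ↑F := by
    ext ⟨α, k⟩
    simp only [Set.mem_setOf_eq, hF, Finset.mem_coe, Finset.mem_filter,
      Finset.mem_product, Finset.mem_Icc]
    constructor
    · rintro ⟨h1, h2⟩
      have hαR : α ∈ R := by
        rcases h1 with ⟨h, _⟩ | ⟨h, _⟩
        exacts [h, hsub h]
      have hb := hMb α hαR
      have hle : c α ≤ (c α).natAbs := Int.le_natAbs
      refine ⟨⟨hαR, ?_, ?_⟩, h1, h2⟩
      · rcases h1 with ⟨_, h⟩ | ⟨_, h⟩ <;> omega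
      · rcases h2 with h | ⟨h, _⟩ <;> omega
    · rintro ⟨_, h⟩
      exact h
  obtain ⟨g, hg⟩ : ∃ g : V → ℕ, ∀ β : V, g β = ((Finset.Icc (0:ℤ) M).filter (fun k =>
      ((β ∈ R ∧ 0 < k) ∨ (β ∈ posR ∧ k = 0)) ∧
      (k - c β < 0 ∨ (k - c β = 0 ∧ w β ∉ posR)))).card := ⟨_, fun β => rfl⟩
  have hsum : F.card = ∑ α ∈ R, g α := by
    simp only [hg]
    rw [hF, Finset.card_filter, Finset.sum_product]
    exact Finset.sum_congr rfl fun α _ => (Finset.card_filter _ _).symm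
  rw [hSF, Set.ncard_coe_finset, hsum]
  have hun : R = posR ∪ posR.image (fun a => -a) := by
    ext α
    simp only [Finset.mem_union, Finset.mem_image]
    constructor
    · intro hα
      rcases hRdecomp α hα with ⟨h, _⟩ | ⟨_, h⟩
      · exact Or.inl h
      · exact Or.inr ⟨-α, h, neg_neg α⟩
    · rintro (h | ⟨β, hβ, rfl⟩)
      · exact hsub h
      · exact hneg β (hsub hβ)
  have hdisj : Disjoint posR (posR.image (fun a => -a)) := by
    rw [Finset.disjoint_left]
    intro α hα hα2
    rw [Finset.mem_image] at hα2
    obtain ⟨β, hβ, hβα⟩ := hα2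
    rcases hRdecomp α (hsub hα) with ⟨_, h⟩ | ⟨h, _⟩
    · exact h (by rw [← hβα, neg_neg]; exact hβ)
    · exact h hα
  rw [hun, Finset.sum_union hdisj,
    Finset.sum_image (fun a _ b _ h => neg_injective h), ← Finset.sum_add_distrib]
  refine Finset.sum_congr rfl fun α hαp => ?_
  have hαR : α ∈ R := hsub hαp
  have hnR : -α ∈ R := hneg α hαR
  have hna : -α ∉ posR := by
    rcases hRdecomp α hαR with ⟨_, h⟩ | ⟨h, _⟩
    exacts [h, absurd hαp h]
  have hwR : w α ∈ R := hw α hαR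
  have hwneg : w (-α) = -(w α) := by simp
  have hcnα : c (-α) = -c α := hcneg α hαR
  have hb : ((c α).natAbs : ℤ) ≤ M - 1 := hMb α hαR
  have hwd := hRdecomp (w α) hwR
  have hchib : chi (w α) = 0 ∨ chi (w α) = 1 := by
    rw [hchi]
    by_cases hp' : w α ∈ posR <;> simp [hp']
  have h1 : ((Finset.Icc (0:ℤ) M).filter (fun k =>
        ((α ∈ R ∧ 0 < k) ∨ (α ∈ posR ∧ k = 0)) ∧
        (k - c α < 0 ∨ (k - c α = 0 ∧ w α ∉ posR)))).card
      = (c α + chi (w α) - 0).toNat := by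
    apply count_Icc_card
    · exact le_rfl
    · omega
    · intro k h0 hM'
      by_cases hp' : w α ∈ posR
      · have he : chi (w α) = 0 := by rw [hchi]; simp [hp']
        rw [he]
        simp only [hαR, hαp, hp', not_true_eq_false, and_false, or_false, true_and]
        omega
      · have he : chi (w α) = 1 := by rw [hchi]; simp [hp']
        rw [he]
        simp only [hαR, hαp, hp', not_false_eq_true, and_true, true_and]
        omega
  have h2 : ((Finset.Icc (0:ℤ) M).filter (fun k =>
        ((-α ∈ R ∧ 0 < k) ∨ (-α ∈ posR ∧ k = 0)) ∧
        (k - c (-α) < 0 ∨ (k - c (-α) = 0 ∧ w (-α) ∉ posR)))).card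
      = (-c α + 1 - chi (w α) - 1).toNat := by
    apply count_Icc_card
    · omega
    · omega
    · intro k h0 hM'
      rw [hcnα, hwneg]
      by_cases hp' : w α ∈ posR
      · have hq : -(w α) ∉ posR := by
          rcases hwd with ⟨_, h⟩ | ⟨h, _⟩
          exacts [h, absurd hp' h]
        have he : chi (w α) = 0 := by rw [hchi]; simp [hp']
        rw [he]
        simp only [hnR, hna, hq, not_false_eq_true, and_true, true_and, false_and, or_false]
        omega
      · have hq : -(w α) ∈ posR := by
          rcases hwd with ⟨h, _⟩ | ⟨_, h⟩
          exacts [absurd h hp', h]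
        have he : chi (w α) = 1 := by rw [hchi]; simp [hp']
        rw [he]
        simp only [hnR, hna, hq, not_true_eq_false, and_false, or_false, true_and, false_and]
        omega
  rw [hg α, hg (-α), h1, h2]
  omega
end

section
/- In any finite-dimensional representation V of a finite Coxeter group W, the kernel of the antisymmetrizer P_- = (1/|W|)Σ_w (-1)^{l(w)} w equals the sum of the subspaces Ker(1 - s_i) over the simple reflections s_i. -/
private lemma sgn_simple_mul {B W : Type*} [Group W] {M : CoxeterMatrix B}
    (cs : CoxeterSystem M W) (i : B) (w : W) :
    ((-1 : ℂ) ^ cs.length (cs.simple i * w)) = -((-1 : ℂ) ^ cs.length w) := by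
  rcases cs.length_simple_mul w i with h | h
  · rw [h, pow_succ]; ring
  · rw [← h, pow_succ]; ring

private lemma sgn_mul_simple {B W : Type*} [Group W] {M : CoxeterMatrix B}
    (cs : CoxeterSystem M W) (i : B) (w : W) :
    ((-1 : ℂ) ^ cs.length (w * cs.simple i)) = -((-1 : ℂ) ^ cs.length w) := by
  rcases cs.length_mul_simple w i with h | h
  · rw [h, pow_succ]; ring
  · rw [← h, pow_succ]; ring

/-- In any finite-dimensional complex representation `V` of a finite
Coxeter group `W`, the kernel of the antisymmetrizer
`P₋ = (1/|W|) Σ_w (-1)^{l(w)} w` equals the sum of the subspaces `Ker(1 - s_i)`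
over the simple reflections `s_i`. -/
theorem stmt17 {B W : Type*} [Group W] [Fintype W] {M : CoxeterMatrix B}
    (cs : CoxeterSystem M W)
    {V : Type*} [AddCommGroup V] [Module ℂ V] [FiniteDimensional ℂ V]
    (ρ : Representation ℂ W V) :
    LinearMap.ker (((Fintype.card W : ℂ))⁻¹ •
        ∑ w : W, ((-1 : ℂ) ^ cs.length w) • ρ w)
      = ⨆ i : B, LinearMap.ker ((1 : V →ₗ[ℂ] V) - ρ (cs.simple i)) := by
  set S := ⨆ i : B, LinearMap.ker ((1 : V →ₗ[ℂ] V) - ρ (cs.simple i)) with hS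
  have hcard : (Fintype.card W : ℂ) ≠ 0 := by
    exact_mod_cast Nat.cast_ne_zero.mpr Fintype.card_ne_zero
  have happ : ∀ v : V, (∑ w : W, ((-1 : ℂ) ^ cs.length w) • ρ w) v
      = ∑ w : W, ((-1 : ℂ) ^ cs.length w) • ρ w v := by
    intro v; simp [LinearMap.sum_apply]
  have hfix : ∀ (i : B) (x : V), x + ρ (cs.simple i) x ∈ S := by
    intro i x
    refine le_iSup (fun i => LinearMap.ker ((1 : V →ₗ[ℂ] V) - ρ (cs.simple i))) i ?_
    have h2 : ρ (cs.simple i) (ρ (cs.simple i) x) = x := by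
      rw [← Module.End.mul_apply, ← map_mul, cs.simple_mul_simple_self, map_one,
        Module.End.one_apply]
    simp [LinearMap.mem_ker, LinearMap.sub_apply, map_add, h2, add_comm]
  -- key claim, by strong induction on length
  have key : ∀ (n : ℕ) (w : W), cs.length w = n → ∀ v : V,
      v - ((-1 : ℂ) ^ cs.length w) • ρ w v ∈ S := by
    intro n
    induction n using Nat.strong_induction_on with
    | _ n ih =>
      intro w hw v
      by_cases h1 : w = 1
      · subst h1
        simp
      · obtain ⟨i, hi⟩ := cs.exists_leftDescent_of_ne_one h1
        set w' := cs.simple i * w with hw'def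
        have hww : w = cs.simple i * w' := by
          rw [hw'def, cs.simple_mul_simple_cancel_left]
        have hlen : cs.length w' < n := hw ▸ hi
        have hsgn : ((-1 : ℂ) ^ cs.length w) = -((-1 : ℂ) ^ cs.length w') := by
          rw [hww, sgn_simple_mul]
        have hrw : ρ w v = ρ (cs.simple i) (ρ w' v) := by
          rw [hww, map_mul, Module.End.mul_apply]
        have heq : v - ((-1 : ℂ) ^ cs.length w) • ρ w v
            = (v - ((-1 : ℂ) ^ cs.length w') • ρ w' v)
              + ((-1 : ℂ) ^ cs.length w') • (ρ w' v + ρ (cs.simple i) (ρ w' v)) := by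
          rw [hsgn, hrw]; module
        rw [heq]
        exact S.add_mem (ih _ hlen w' rfl v) (S.smul_mem _ (hfix i (ρ w' v)))
  apply le_antisymm
  · -- ker P₋ ≤ S
    intro v hv
    rw [LinearMap.mem_ker, LinearMap.smul_apply, smul_eq_zero] at hv
    rcases hv with h | h
    · exact absurd h (inv_ne_zero hcard)
    · have hsum : ∑ w : W, ((-1 : ℂ) ^ cs.length w) • ρ w v = 0 := by
        rw [← happ]; exact h
      have hv2 : (Fintype.card W : ℂ) • v
          = ∑ w : W, (v - ((-1 : ℂ) ^ cs.length w) • ρ w v) := by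
        rw [Finset.sum_sub_distrib, hsum, sub_zero, Finset.sum_const,
          Finset.card_univ, Nat.cast_smul_eq_nsmul ℂ]
      have hmem : (Fintype.card W : ℂ) • v ∈ S := by
        rw [hv2]
        exact Submodule.sum_mem S fun w _ => key (cs.length w) w rfl v
      have : v = (Fintype.card W : ℂ)⁻¹ • ((Fintype.card W : ℂ) • v) := by
        rw [smul_smul, inv_mul_cancel₀ hcard, one_smul]
      rw [this]
      exact S.smul_mem _ hmem
  · -- S ≤ ker P₋
    rw [hS]
    refine iSup_le fun i => fun v hv => ?_
    rw [LinearMap.mem_ker, LinearMap.sub_apply, Module.End.one_apply, sub_eq_zero] at hv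
    rw [LinearMap.mem_ker, LinearMap.smul_apply, happ]
    have hflip : ∑ w : W, ((-1 : ℂ) ^ cs.length w) • ρ w v
        = -∑ w : W, ((-1 : ℂ) ^ cs.length w) • ρ w v := by
      nth_rw 1 [← Fintype.sum_equiv (Equiv.mulRight (cs.simple i))
        (fun w => ((-1 : ℂ) ^ cs.length (w * cs.simple i)) • ρ (w * cs.simple i) v)
        (fun w => ((-1 : ℂ) ^ cs.length w) • ρ w v) (fun w => rfl)]
      rw [← Finset.sum_neg_distrib]
      refine Finset.sum_congr rfl fun w _ => ?_
      rw [sgn_mul_simple, map_mul, Module.End.mul_apply, ← hv, neg_smul]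
    have hzero : ∑ w : W, ((-1 : ℂ) ^ cs.length w) • ρ w v = 0 := by
      have h2 : (2 : ℂ) • ∑ w : W, ((-1 : ℂ) ^ cs.length w) • ρ w v = 0 := by
        rw [two_smul]
        nth_rw 1 [hflip]
        rw [neg_add_cancel]
      rcases smul_eq_zero.mp h2 with h | h
      · exact absurd h two_ne_zero
      · exact h
    rw [hzero, smul_zero]
end
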